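/- arXiv:2502.03180 — 4 statements merged into one kernel-verified Lean document; each statement's English description precedes it below -/
import Mathlib

section
/- Let n ≥ r+2 and K = ker(ψ : F_r^{(1)} × ⋯ × F_r^{(n)} → ℤ^r) as above, with x_j^{(α)} = a_j^{(α)}(a_j^{(n)})⁻¹. For i, j ∈ {1,…,r} and k ∈ {r+1,…,n−1}, the commutator [x_i^{(k)}(x_i^{(i)})⁻¹, x_j^{(j)}] is trivial in K. -/
section
variable (n r : ℕ)

/-- The direct product of `n` copies of the free group of rank `r`. -/
abbrev Gnr := Fin n → FreeGroup (Fin r)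

/-- `ℤ^r`, written multiplicatively. -/
abbrev Zr (r : ℕ) := Multiplicative (Fin r → ℤ)

/-- The homomorphism `F_r → ℤ^r` sending the `j`-th generator to the `j`-th basis vector. -/
def φr : FreeGroup (Fin r) →* Zr r :=
  FreeGroup.lift (fun j => Multiplicative.ofAdd (Pi.single j 1))

/-- The homomorphism `ψ : F_r^{(1)} × ⋯ × F_r^{(n)} → ℤ^r` with `ψ(a_j^{(α)}) = e_j`. -/
def ψnr : Gnr n r →* Zr r :=
  ∏ α : Fin n, (φr r).comp (Pi.evalMonoidHom (fun _ => FreeGroup (Fin r)) α)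

variable {n} in
/-- The inclusion of the `α`-th factor into the direct product. -/
def ins (α : Fin n) : FreeGroup (Fin r) →* Gnr n r :=
  MonoidHom.mulSingle (fun _ => FreeGroup (Fin r)) α

end

/-- The last index, corresponding to the `n`-th factor. -/
def lastIdx {n : ℕ} (hn : 0 < n) : Fin n := ⟨n - 1, by omega⟩

/-- The generators `x_j^{(α)} = a_j^{(α)} (a_j^{(n)})⁻¹` of the kernel. -/
def xg {n r : ℕ} (hn : 0 < n) (α : Fin n) (j : Fin r) : Gnr n r :=
  ins r α (FreeGroup.of j) * (ins r (lastIdx hn) (FreeGroup.of j))⁻¹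

open scoped commutatorElement

/-!
Since `x_i^{(k)} (x_i^{(i)})⁻¹ = a_i^{(k)} (a_i^{(i)})⁻¹`, the first element is supported on the
factors `k` and `i`, the second on the factors `j` and `n`. Elements of distinct factors commute,
and `k` differs from `j` and `n`, so the only possible obstruction is factor `i = j`, where both
elements are powers of the same generator.
-/

theorem xg_mul_inv_xg {n r : ℕ} (hn : 0 < n) (α β : Fin n) (j : Fin r) :
    xg hn α j * (xg hn β j)⁻¹ = ins r α (FreeGroup.of j) * (ins r β (FreeGroup.of j))⁻¹ := by
  simp only [xg, mul_inv_rev, inv_inv, mul_assoc, inv_mul_cancel_left]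

theorem commute_ins_of_ne {n : ℕ} (r : ℕ) {α β : Fin n} (h : α ≠ β) (x y : FreeGroup (Fin r)) :
    Commute (ins r α x) (ins r β y) :=
  Pi.mulSingle_commute (f := fun _ => FreeGroup (Fin r)) h x y

theorem commute_ins_of_diagonal {n r : ℕ} (i j : Fin r) (hi : i.1 < n) (hj : j.1 < n) :
    Commute (ins r ⟨i.1, hi⟩ (FreeGroup.of i)) (ins r ⟨j.1, hj⟩ (FreeGroup.of j)) := by
  by_cases hij : i = j
  · subst hij
    exact Commute.refl _
  · exact commute_ins_of_ne r (fun h => hij (Fin.ext (Fin.mk.inj h))) _ _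

/-- For `n ≥ r+2`, `i, j ∈ {1,…,r}` and `k ∈ {r+1,…,n−1}`, the commutator
`[x_i^{(k)}(x_i^{(i)})⁻¹, x_j^{(j)}]` is trivial. -/
theorem balanced_commute_with_diagonal (n r : ℕ) (hrn : r + 2 ≤ n)
    (i j : Fin r) (k : Fin n) (hk1 : r ≤ k.1) (hk2 : k.1 < n - 1) :
    ⁅xg (by omega : 0 < n) k i *
        (xg (by omega : 0 < n) ⟨i.1, lt_of_lt_of_le i.2 (by omega)⟩ i)⁻¹,
      xg (by omega : 0 < n) ⟨j.1, lt_of_lt_of_le j.2 (by omega)⟩ j⁆ = 1 := by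
  rw [xg_mul_inv_xg, commutatorElement_eq_one_iff_commute, xg]
  have hk_ne_j : k ≠ ⟨j.1, lt_of_lt_of_le j.2 (by omega)⟩ :=
    Fin.ne_of_val_ne (by dsimp only; omega)
  have hk_ne_last : k ≠ lastIdx (by omega : 0 < n) :=
    Fin.ne_of_val_ne (by simp only [lastIdx]; omega)
  have hi_ne_last : (⟨i.1, lt_of_lt_of_le i.2 (by omega)⟩ : Fin n) ≠ lastIdx (by omega) :=
    Fin.ne_of_val_ne (by simp only [lastIdx]; omega)
  refine Commute.mul_left ?_ (Commute.inv_left ?_) <;>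
    refine Commute.mul_right ?_ (Commute.inv_right ?_)
  · exact commute_ins_of_ne r hk_ne_j _ _
  · exact commute_ins_of_ne r hk_ne_last _ _
  · exact commute_ins_of_diagonal i j _ _
  · exact commute_ins_of_ne r hi_ne_last _ _
end

section
/- Let G be a group, r ≥ 1, and s₁,…,s_r, t₁,…,t_r ∈ G such that [tᵢ, tⱼ⁻¹sⱼ] = 1 for all i, j ∈ {1,…,r}. Let w(z₁,…,z_r) be any word in r letters. Then in G, w(t₁,…,t_r)⁻¹ · w(s₁,…,s_r) = w(t₁⁻¹s₁, …, t_r⁻¹s_r). -/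
/-!
Put `uᵢ = tᵢ⁻¹sᵢ`. Every `tᵢ` commutes with every `uⱼ`, so the subgroups they generate commute
elementwise and `w ↦ w(t) · w(u)` is a homomorphism on the free group. It agrees with
`w ↦ w(s)` on the generators, since `sᵢ = tᵢuᵢ`; hence `w(s) = w(t) · w(u)`.
-/

open scoped commutatorElement

namespace FreeGroup

theorem commute_lift_lift {α β G : Type*} [Group G] {f : α → G} {g : β → G}
    (h : ∀ a b, Commute (f a) (g b)) (x : FreeGroup α) (y : FreeGroup β) :
    Commute (lift f x) (lift g y) := by
  have hg : (lift g).range ≤ Subgroup.centralizer (lift f).range := by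
    rw [range_lift_eq_closure, range_lift_eq_closure, Subgroup.centralizer_closure]
    exact (Subgroup.closure_le _).2 <| Set.range_subset_iff.2 fun b =>
      Subgroup.mem_centralizer_iff.2 <| Set.forall_mem_range.2 fun a => h a b
  exact Subgroup.mem_centralizer_iff.1 (hg ⟨y, rfl⟩) _ ⟨x, rfl⟩

theorem lift_mul_of_commute {α G : Type*} [Group G] {f g : α → G}
    (h : ∀ a b, Commute (f a) (g b)) (x : FreeGroup α) :
    lift (fun a => f a * g a) x = lift f x * lift g x := by
  have hom : lift (fun a => f a * g a) =
      ((lift f).noncommCoprod (lift g) (commute_lift_lift h)).comp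
        ((MonoidHom.id _).prod (MonoidHom.id _)) := by
    ext a
    simp
  exact DFunLike.congr_fun hom x

end FreeGroup

/-- The "merge words" identity: if `[tᵢ, tⱼ⁻¹sⱼ] = 1` for all `i, j`, then for every word
`w` in `r` letters, `w(t₁,…,t_r)⁻¹ · w(s₁,…,s_r) = w(t₁⁻¹s₁,…,t_r⁻¹s_r)`. -/
theorem merge_words {G : Type*} [Group G] (r : ℕ) (s t : Fin r → G)
    (h : ∀ i j : Fin r, ⁅t i, (t j)⁻¹ * s j⁆ = 1) (w : FreeGroup (Fin r)) :
    (FreeGroup.lift t w)⁻¹ * FreeGroup.lift s w =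
      FreeGroup.lift (fun i => (t i)⁻¹ * s i) w := by
  have hs : s = fun i => t i * ((t i)⁻¹ * s i) := funext fun i => (mul_inv_cancel_left _ _).symm
  have comm : ∀ i j, Commute (t i) ((t j)⁻¹ * s j) := fun i j =>
    commutatorElement_eq_one_iff_commute.1 (h i j)
  conv_lhs => rw [hs, FreeGroup.lift_mul_of_commute comm]
  exact inv_mul_cancel_left _ _
end

section
/- Every element g of K = ker(ψ : F_r^{(1)} × ⋯ × F_r^{(n)} → ℤ^r) (n ≥ r+2) admits a unique normal form: a word w_g in the free group on the generators X = {x_j^{(α)} : α ≤ n−1, j ≤ r} representing g that decomposes as w_g = w_g^Δ · w_g^{(1)} ⋯ w_g^{(n−1)}, where each w_g^{(i)} is a word only in the letters x_1^{(i)},…,x_r^{(i)} and w_g^Δ lies in the commutator subgroup of the free group on Δ = (x_1^{(1)},…,x_r^{(r)}). Moreover w_g^{(i)}, with x_j^{(i)} replaced by a_j^{(i)}, represents the projection of g to the i-th factor. -/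
/-- The free group on the generating set `X = {x_j^{(α)} : α ≤ n−1, j ≤ r}` of `K`. -/
abbrev FX (n r : ℕ) := FreeGroup (Fin (n - 1) × Fin r)

/-- Evaluation of words in the letters `X` in the ambient direct product. -/
def evX (n r : ℕ) (hn : 2 ≤ n) : FX n r →* Gnr n r :=
  FreeGroup.lift (fun p => xg (by omega) ⟨p.1.1, by omega⟩ p.2)

/-- The inclusion of words in the letters `x_1^{(i)},…,x_r^{(i)}` into `F(X)`. -/
def insL {n r : ℕ} (i : Fin (n - 1)) : FreeGroup (Fin r) →* FX n r :=
  FreeGroup.lift (fun j => FreeGroup.of (i, j))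

/-- The inclusion of words in the diagonal letters `Δ = (x_1^{(1)},…,x_r^{(r)})`
into `F(X)`. -/
def insD (n r : ℕ) (hrn : r + 2 ≤ n) : FreeGroup (Fin r) →* FX n r :=
  FreeGroup.lift (fun j => FreeGroup.of (⟨j.1, by omega⟩, j))

/-! Coordinate `i < n` of the evaluation of a word in `X` only sees the letters `x_j^{(i)}`,
read as `a_j`, while the last coordinate reads every letter `x_j^{(α)}` as `a_j⁻¹`. For a word
`w^Δ · w^{(1)} ⋯ w^{(n−1)}` with `w^Δ` a product of commutators, the `i`-th coordinate of `w^Δ`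
is a power of the single generator `a_i`, hence trivial; so the coordinates of the value are
`w^{(i)}` and, last, `w^Δ w^{(1)} ⋯ w^{(n−1)}` with all generators inverted. This forces
`w^{(i)} = g_i` and determines `w^Δ`, and the `w^Δ` so obtained is a product of commutators
because its image in `ℤ^r` is `ψ(g)⁻¹ = 1`. -/

theorem List.prod_ofFn_mulSingle {M : Type*} [Monoid M] {m : ℕ} (i : Fin m) (x : M) :
    (List.ofFn (Pi.mulSingle i x : Fin m → M)).prod = x := by
  induction m with
  | zero => exact i.elim0
  | succ m ih =>
    rw [List.ofFn_succ, List.prod_cons]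
    cases i using Fin.cases with
    | zero => simp [Fin.succ_ne_zero]
    | succ i =>
      have hsucc : (fun k : Fin m => (Pi.mulSingle i.succ x : Fin (m + 1) → M) k.succ) =
          Pi.mulSingle i x := by
        ext k; simp [Pi.mulSingle_apply]
      simp [hsucc, ih]

namespace FreeGroup

variable {α : Type*}

def invGens : FreeGroup α →* FreeGroup α :=
  lift fun a => (of a)⁻¹

@[simp]
theorem invGens_of (a : α) : invGens (of a) = (of a)⁻¹ :=
  lift_apply_of

@[simp]
theorem invGens_invGens (w : FreeGroup α) : invGens (invGens w) = w := by
  have h : invGens.comp invGens = MonoidHom.id (FreeGroup α) := by ext; simp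
  exact DFunLike.congr_fun h w

open scoped IsMulCommutative in
theorem lift_eq_one_of_mem_commutator {G : Type*} [Group G] {f : α → G}
    (hf : ∀ a b, Commute (f a) (f b)) {w : FreeGroup α} (hw : w ∈ commutator (FreeGroup α)) :
    lift f w = 1 := by
  have : IsMulCommutative (lift f).range := by
    rw [range_lift_eq_closure]
    refine Subgroup.isMulCommutative_closure ?_
    rintro _ ⟨a, rfl⟩ _ ⟨b, rfl⟩
    exact hf a b
  simpa [MonoidHom.ker_rangeRestrict] using
    Abelianization.commutator_subset_ker (lift f).rangeRestrict hw

end FreeGroup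

open FreeGroup hiding map_mul map_inv map_one

section Abelianization

variable {r : ℕ}

theorem φr_invGens (w : FreeGroup (Fin r)) : φr r (invGens w) = (φr r w)⁻¹ := by
  have h : (φr r).comp invGens = (φr r)⁻¹ := by ext; simp [φr]
  exact DFunLike.congr_fun h w

/-- The inverse of the isomorphism `F_r^{ab} ≃ ℤ^r` induced by `φr`. -/
noncomputable def zrToAbelianization : Zr r →* Abelianization (FreeGroup (Fin r)) :=
  ∏ j : Fin r, (zpowersHom _ (Abelianization.of (of j))).comp
    (AddMonoidHom.toMultiplicative (Pi.evalAddMonoidHom (fun _ => ℤ) j))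

theorem zrToAbelianization_comp_φr : zrToAbelianization.comp (φr r) = Abelianization.of := by
  ext a : 1
  simp only [MonoidHom.comp_apply, φr, lift_apply_of, zrToAbelianization,
    MonoidHom.finsetProd_apply]
  rw [Finset.prod_eq_single a]
  · simp [zpowersHom]
  · intro b _ hb
    simp [zpowersHom, hb.symm]
  · simp

theorem mem_commutator_iff_φr_eq_one (w : FreeGroup (Fin r)) :
    w ∈ commutator (FreeGroup (Fin r)) ↔ φr r w = 1 := by
  refine ⟨fun h => Abelianization.commutator_subset_ker (φr r) h, fun h => ?_⟩
  rw [← Abelianization.ker_of, MonoidHom.mem_ker, ← zrToAbelianization_comp_φr,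
    MonoidHom.comp_apply, h, map_one]

end Abelianization

section NormalForm

variable {n r : ℕ}

def blockProj (i : Fin (n - 1)) : FX n r →* FreeGroup (Fin r) :=
  lift fun p => if p.1 = i then of p.2 else 1

theorem blockProj_insL (i k : Fin (n - 1)) (w : FreeGroup (Fin r)) :
    blockProj i (insL k w) = if k = i then w else 1 := by
  by_cases hk : k = i
  · subst hk
    have hid : (blockProj k).comp (insL k) = MonoidHom.id (FreeGroup (Fin r)) := by
      ext; simp [blockProj, insL]
    simpa using DFunLike.congr_fun hid w
  · have hone : (blockProj i).comp (insL k) = (1 : FreeGroup (Fin r) →* FreeGroup (Fin r)) := by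
      ext; simp [blockProj, insL, hk]
    simpa [hk] using DFunLike.congr_fun hone w

theorem blockProj_prod_insL (i : Fin (n - 1)) (ws : Fin (n - 1) → FreeGroup (Fin r)) :
    blockProj i (List.ofFn fun k => insL k (ws k)).prod = ws i := by
  rw [map_list_prod, List.map_ofFn]
  convert List.prod_ofFn_mulSingle i (ws i) using 3
  funext k
  by_cases hk : k = i
  · subst hk; simp [blockProj_insL]
  · simp [blockProj_insL, hk]

theorem blockProj_insD_of_mem_commutator (hrn : r + 2 ≤ n) (i : Fin (n - 1))
    {d : FreeGroup (Fin r)} (hd : d ∈ commutator (FreeGroup (Fin r))) :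
    blockProj i (insD n r hrn d) = 1 := by
  let f : Fin r → FreeGroup (Fin r) := fun j => if j.1 = i.1 then of j else 1
  have hcomp : (blockProj i).comp (insD n r hrn) = lift f := by
    ext j; simp [blockProj, insD, f, Fin.ext_iff]
  rw [← MonoidHom.comp_apply, hcomp]
  refine lift_eq_one_of_mem_commutator (fun a b => ?_) hd
  by_cases ha : a.1 = i.1
  · by_cases hb : b.1 = i.1
    · rw [Fin.ext (ha.trans hb.symm)]
      exact Commute.refl _
    · simp [f, hb]
  · simp [f, ha]

theorem map_snd_insL (i : Fin (n - 1)) (w : FreeGroup (Fin r)) :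
    map Prod.snd (insL i w) = w := by
  have hid : (map Prod.snd).comp (insL i) = MonoidHom.id (FreeGroup (Fin r)) := by
    ext; simp [insL]
  exact DFunLike.congr_fun hid w

theorem map_snd_insD (hrn : r + 2 ≤ n) (d : FreeGroup (Fin r)) :
    map Prod.snd (insD n r hrn d) = d := by
  have hid : (map Prod.snd).comp (insD n r hrn) = MonoidHom.id (FreeGroup (Fin r)) := by
    ext; simp [insD]
  exact DFunLike.congr_fun hid d

variable (h : 2 ≤ n)

theorem evX_apply_castLE (w : FX n r) (i : Fin (n - 1)) :
    evX n r h w (Fin.castLE (Nat.sub_le n 1) i) = blockProj i w := by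
  have hcomp : (Pi.evalMonoidHom _ (Fin.castLE (Nat.sub_le n 1) i)).comp (evX n r h) =
      blockProj i := by
    ext ⟨k, j⟩
    simp [evX, blockProj, xg, ins, lastIdx, Pi.mulSingle_apply, Fin.ext_iff, i.isLt.ne, eq_comm]
  exact DFunLike.congr_fun hcomp w

theorem evX_apply_lastIdx (w : FX n r) :
    evX n r h w (lastIdx (by omega)) = invGens (map Prod.snd w) := by
  have hcomp : (Pi.evalMonoidHom _ (lastIdx (by omega))).comp (evX n r h) =
      invGens.comp (map Prod.snd) := by
    ext ⟨k, j⟩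
    simp [evX, xg, ins, lastIdx, Fin.ext_iff, k.isLt.ne']
  exact DFunLike.congr_fun hcomp w

def normalWord (hrn : r + 2 ≤ n) (d : FreeGroup (Fin r)) (ws : Fin (n - 1) → FreeGroup (Fin r)) :
    FX n r :=
  insD n r hrn d * (List.ofFn fun i => insL i (ws i)).prod

theorem evX_normalWord_eq_iff (hrn : r + 2 ≤ n) {d : FreeGroup (Fin r)}
    (hd : d ∈ commutator (FreeGroup (Fin r))) (ws : Fin (n - 1) → FreeGroup (Fin r))
    (g : Gnr n r) :
    evX n r h (normalWord hrn d ws) = g ↔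
      (∀ i, ws i = g (Fin.castLE (Nat.sub_le n 1) i)) ∧
        invGens (d * (List.ofFn ws).prod) = g (lastIdx (by omega)) := by
  have hblock (i : Fin (n - 1)) :
      evX n r h (normalWord hrn d ws) (Fin.castLE (Nat.sub_le n 1) i) = ws i := by
    rw [evX_apply_castLE, normalWord, map_mul, blockProj_insD_of_mem_commutator hrn i hd,
      one_mul, blockProj_prod_insL]
  have hlast : evX n r h (normalWord hrn d ws) (lastIdx (by omega)) =
      invGens (d * (List.ofFn ws).prod) := by
    rw [evX_apply_lastIdx, normalWord, map_mul, map_snd_insD, map_list_prod, List.map_ofFn]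
    simp only [Function.comp_def, map_snd_insL]
  constructor
  · rintro rfl
    exact ⟨fun i => (hblock i).symm, hlast.symm⟩
  · rintro ⟨hws, hg_last⟩
    funext β
    by_cases hβ : β.1 < n - 1
    · rw [show β = Fin.castLE (Nat.sub_le n 1) ⟨β.1, hβ⟩ from rfl, hblock, hws]
    · rw [show β = lastIdx (by omega) from Fin.ext (by simp [lastIdx]; omega), hlast, hg_last]

theorem ψnr_apply_eq_mul (g : Gnr n r) :
    ψnr n r g = (∏ i : Fin (n - 1), φr r (g (Fin.castLE (Nat.sub_le n 1) i))) *
      φr r (g (lastIdx (by omega))) := by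
  obtain ⟨m, rfl⟩ : ∃ m, n = m + 1 := ⟨n - 1, by omega⟩
  rw [ψnr, MonoidHom.finsetProd_apply]
  exact Fin.prod_univ_castSucc fun α => φr r (g α)

def diagPart (g : Gnr n r) : FreeGroup (Fin r) :=
  invGens (g (lastIdx (by omega))) * (List.ofFn fun i => g (Fin.castLE (Nat.sub_le n 1) i)).prod⁻¹

theorem diagPart_mem_commutator {g : Gnr n r} (hg : g ∈ (ψnr n r).ker) :
    diagPart h g ∈ commutator (FreeGroup (Fin r)) := by
  rw [mem_commutator_iff_φr_eq_one, diagPart, map_mul, map_inv, φr_invGens, map_list_prod,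
    List.map_ofFn, List.prod_ofFn, ← mul_inv, mul_comm]
  rw [MonoidHom.mem_ker, ψnr_apply_eq_mul h] at hg
  simp only [Function.comp_apply, hg, inv_one]

end NormalForm

/-- Existence and uniqueness of the normal form: every `g ∈ K` is represented by a unique
word `w_g = w_g^Δ · w_g^{(1)} ⋯ w_g^{(n−1)}`, where `w_g^{(i)}` is a word in the letters
`x_1^{(i)},…,x_r^{(i)}` and `w_g^Δ` is a word in the diagonal letters `Δ` lying in the
commutator subgroup.  Moreover `w_g^{(i)}` (with `x_j^{(i)}` replaced by `a_j^{(i)}`)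
represents the projection of `g` to the `i`-th factor. -/
theorem normal_form_exists_unique (n r : ℕ) (hrn : r + 2 ≤ n)
    (g : Gnr n r) (hg : g ∈ (ψnr n r).ker) :
    ∃ (d : FreeGroup (Fin r)) (ws : Fin (n - 1) → FreeGroup (Fin r)),
      (d ∈ commutator (FreeGroup (Fin r)) ∧
        evX n r (by omega)
          (insD n r hrn d * (List.ofFn (fun i : Fin (n - 1) => insL i (ws i))).prod) = g ∧
        ∀ i : Fin (n - 1), ws i = g ⟨i.1, by omega⟩) ∧
      ∀ (d' : FreeGroup (Fin r)) (ws' : Fin (n - 1) → FreeGroup (Fin r)),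
        d' ∈ commutator (FreeGroup (Fin r)) →
        evX n r (by omega)
          (insD n r hrn d' * (List.ofFn (fun i : Fin (n - 1) => insL i (ws' i))).prod) = g →
        d' = d ∧ ws' = ws := by
  have h2 : 2 ≤ n := by omega
  have hd := diagPart_mem_commutator h2 hg
  refine ⟨diagPart h2 g, fun i => g (Fin.castLE (Nat.sub_le n 1) i), ⟨hd, ?_, fun i => rfl⟩, ?_⟩
  · refine (evX_normalWord_eq_iff h2 hrn hd _ g).2 ⟨fun i => rfl, ?_⟩
    rw [diagPart, inv_mul_cancel_right, invGens_invGens]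
  · intro d' ws' hd' hg'
    obtain ⟨hws, hlast⟩ := (evX_normalWord_eq_iff h2 hrn hd' ws' g).1 hg'
    obtain rfl : ws' = fun i => g (Fin.castLE (Nat.sub_le n 1) i) := funext hws
    refine ⟨?_, rfl⟩
    rw [diagPart, ← hlast, invGens_invGens, mul_inv_cancel_right]
end

section
/- Let P ⊆ F(x₁,x₂,y₁,y₂) be the set of words representing the trivial element of the Bridson–Dison group K. Fix Gaussian integers p_x, p_y ∈ ℤ[i], and set p̂_x = p_x − (1/3 + i/3), p̂_y = p_y + (1/3 + i/3). For w ∈ P, define paths γ_x, γ_y in ℂ starting at p̂_x, p̂_y, where each letter x₁^δ (resp. x₂^δ) moves γ_x by δ (resp. iδ) while γ_y stays, and each letter y₁^δ (resp. y₂^δ) moves γ_y by −δ (resp. −iδ) while γ_x stays. Then at every time t ∈ [0,1], the three points 0, γ_x(t), γ_y(t) are pairwise distinct, and γ_x(1) = p̂_x, γ_y(1) = p̂_y; i.e., (γ_x, γ_y) is a loop in the configuration space Conf₂(ℂ∖{0}). -/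
/-- The free group of rank 2. -/
abbrev F2 := FreeGroup (Fin 2)

/-- The direct product of three free groups of rank 2. -/
abbrev G3 := F2 × F2 × F2

/-- `ℤ²`, written multiplicatively. -/
abbrev Z2 := Multiplicative (Fin 2 → ℤ)

/-- The `i`-th standard basis vector of `ℤ²`. -/
def e (i : Fin 2) : Z2 := Multiplicative.ofAdd (Pi.single i 1)

/-- The homomorphism `F₂ → ℤ²` sending the `i`-th generator to `eᵢ`. -/
def φ : F2 →* Z2 := FreeGroup.lift e

/-- Projection to the first factor. -/
def pa : G3 →* F2 := MonoidHom.fst _ _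
/-- Projection to the second factor. -/
def pb : G3 →* F2 := (MonoidHom.fst _ _).comp (MonoidHom.snd _ _)
/-- Projection to the third factor. -/
def pc : G3 →* F2 := (MonoidHom.snd F2 F2).comp (MonoidHom.snd _ _)

/-- The homomorphism `ψ : F₂ × F₂ × F₂ → ℤ²` with `ψ(aᵢ) = ψ(bᵢ) = ψ(cᵢ) = eᵢ`. -/
def ψ : G3 →* Z2 := (φ.comp pa) * (φ.comp pb) * (φ.comp pc)

/-- The generators `aᵢ` of the first factor, inside the product. -/
def a (i : Fin 2) : G3 := (FreeGroup.of i, 1, 1)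
/-- The generators `bᵢ` of the second factor, inside the product. -/
def b (i : Fin 2) : G3 := (1, FreeGroup.of i, 1)
/-- The generators `cᵢ` of the third factor, inside the product. -/
def c (i : Fin 2) : G3 := (1, 1, FreeGroup.of i)

/-- `xᵢ = aᵢ cᵢ⁻¹`. -/
def x (i : Fin 2) : G3 := a i * (c i)⁻¹
/-- `yᵢ = bᵢ cᵢ⁻¹`. -/
def y (i : Fin 2) : G3 := b i * (c i)⁻¹

/-- The alphabet `{x₁, x₂, y₁, y₂}`. -/
abbrev S4 := Fin 2 ⊕ Fin 2

/-- The evaluation map `F(x₁,x₂,y₁,y₂) → F₂ × F₂ × F₂`, `xᵢ ↦ aᵢcᵢ⁻¹`, `yᵢ ↦ bᵢcᵢ⁻¹`. -/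
def ev : FreeGroup S4 →* G3 := FreeGroup.lift (Sum.elim x y)

open Complex in
/-- The displacement of the first point (`γ_x`) caused by a single letter: `x₁^δ` moves by
`δ`, `x₂^δ` moves by `iδ`, the letters `y` do not move it. -/
def dx : S4 × Bool → ℂ
  | (Sum.inl i, δ) => (if δ then 1 else -1) * (if i = 0 then 1 else Complex.I)
  | (Sum.inr _, _) => 0

/-- The displacement of the second point (`γ_y`) caused by a single letter: `y₁^δ` moves by
`−δ`, `y₂^δ` moves by `−iδ`, the letters `x` do not move it. -/
def dy : S4 × Bool → ℂ
  | (Sum.inl _, _) => 0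
  | (Sum.inr i, δ) => -((if δ then 1 else -1) * (if i = 0 then 1 else Complex.I))

/-- The perturbed base point `p̂_x = p_x − (1/3 + i/3)`. -/
noncomputable def hatx (px : GaussianInt) : ℂ :=
  px.toComplex - (1 / 3 + (1 / 3) * Complex.I)

/-- The perturbed base point `p̂_y = p_y + (1/3 + i/3)`. -/
noncomputable def haty (py : GaussianInt) : ℂ :=
  py.toComplex + (1 / 3 + (1 / 3) * Complex.I)

/-!
The displacement of `γ_x` along a word `w` is the image of the first coordinate of `ev w` in
`ℤ² ≅ ℤ[i]`, and that of `γ_y` is minus the image of the second coordinate; both vanish when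
`ev w = 1`, so the paths close up. For avoidance, every point reached at a letter boundary
differs from `p̂_x` (resp. `p̂_y`) by a Gaussian integer, so it is of the form `q + (k/3)(1 + i)`
with `q ∈ ℤ[i]` and `3 ∤ k`; the same holds for `γ_x − γ_y`, with `k = -2`. Such a point has
nonzero real and imaginary parts, and a segment is parallel to an axis, so it changes only one
of them and cannot reach `0`.
-/

open Complex

lemma intCast_add_div_three_ne_zero (m : ℤ) {k : ℤ} (hk : ¬ (3 : ℤ) ∣ k) :
    (m : ℝ) + k / 3 ≠ 0 := by
  intro h
  refine hk ⟨-m, ?_⟩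
  have : ((k : ℤ) : ℝ) = ((3 * -m : ℤ) : ℝ) := by push_cast; linarith
  exact_mod_cast this

lemma add_ofReal_mul_ne_zero {z d : ℂ} (hre : z.re ≠ 0) (him : z.im ≠ 0)
    (hd : d.re = 0 ∨ d.im = 0) (s : ℝ) : z + s * d ≠ 0 := by
  intro h
  rcases hd with hd | hd
  · exact hre (by simpa [hd] using congrArg re h)
  · exact him (by simpa [hd] using congrArg im h)

lemma gaussianInt_add_div_three_add_ofReal_mul_ne_zero (q : GaussianInt) {k : ℤ}
    (hk : ¬ (3 : ℤ) ∣ k) {g : ℂ} (hg : g ∈ GaussianInt.toComplex.range) {d : ℂ}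
    (hd : d.re = 0 ∨ d.im = 0) (s : ℝ) :
    (q : ℂ) + k / 3 * (1 + I) + g + s * d ≠ 0 := by
  obtain ⟨g, rfl⟩ := hg
  refine add_ofReal_mul_ne_zero ?_ ?_ hd s
  · convert intCast_add_div_three_ne_zero (q + g).re hk using 1
    simp [← GaussianInt.intCast_re]
    ring
  · convert intCast_add_div_three_ne_zero (q + g).im hk using 1
    simp [← GaussianInt.intCast_im]
    ring

lemma hatx_eq (px : GaussianInt) : hatx px = (px : ℂ) + ((-1 : ℤ) : ℂ) / 3 * (1 + I) := by
  rw [hatx]; push_cast; ring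

lemma haty_eq (py : GaussianInt) : haty py = (py : ℂ) + ((1 : ℤ) : ℂ) / 3 * (1 + I) := by
  rw [haty]; push_cast; ring

lemma dx_mem_range (p : S4 × Bool) : dx p ∈ GaussianInt.toComplex.range := by
  rcases p with ⟨i | i, δ⟩
  · fin_cases i <;> cases δ
    · exact ⟨-1, by simp [dx]⟩
    · exact ⟨1, by simp [dx]⟩
    · exact ⟨⟨0, -1⟩, by simp [dx, GaussianInt.toComplex_def']⟩
    · exact ⟨⟨0, 1⟩, by simp [dx, GaussianInt.toComplex_def']⟩
  · exact ⟨0, by simp [dx]⟩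

lemma dy_mem_range (p : S4 × Bool) : dy p ∈ GaussianInt.toComplex.range := by
  rcases p with ⟨i | i, δ⟩
  · exact ⟨0, by simp [dy]⟩
  · fin_cases i <;> cases δ
    · exact ⟨1, by simp [dy]⟩
    · exact ⟨-1, by simp [dy]⟩
    · exact ⟨⟨0, 1⟩, by simp [dy, GaussianInt.toComplex_def']⟩
    · exact ⟨⟨0, -1⟩, by simp [dy, GaussianInt.toComplex_def']⟩

lemma sum_map_mem_range {α : Type*} {f : α → ℂ} (hf : ∀ p, f p ∈ GaussianInt.toComplex.range)
    (L : List α) : (L.map f).sum ∈ GaussianInt.toComplex.range :=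
  Subring.list_sum_mem _ (by simp only [List.mem_map]; rintro _ ⟨p, -, rfl⟩; exact hf p)

lemma dx_re_eq_zero_or_im_eq_zero (p : S4 × Bool) : (dx p).re = 0 ∨ (dx p).im = 0 := by
  rcases p with ⟨i | i, δ⟩ <;> fin_cases i <;> cases δ <;> simp [dx]

lemma dy_re_eq_zero_or_im_eq_zero (p : S4 × Bool) : (dy p).re = 0 ∨ (dy p).im = 0 := by
  rcases p with ⟨i | i, δ⟩ <;> fin_cases i <;> cases δ <;> simp [dy]

lemma dx_sub_dy_re_eq_zero_or_im_eq_zero (p : S4 × Bool) :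
    (dx p - dy p).re = 0 ∨ (dx p - dy p).im = 0 := by
  rcases p with ⟨i | i, δ⟩ <;> fin_cases i <;> cases δ <;> simp [dx, dy]

lemma dx_false (l : S4) : dx (l, false) = -dx (l, true) := by
  rcases l with i | i <;> fin_cases i <;> simp [dx]

lemma dy_false (l : S4) : dy (l, false) = -dy (l, true) := by
  rcases l with i | i <;> fin_cases i <;> simp [dy]

theorem FreeGroup.sum_map_toWord_eq_toAdd_lift {α A : Type*} [DecidableEq α] [AddCommGroup A]
    (f : α × Bool → A) (hf : ∀ a, f (a, false) = -f (a, true)) (w : FreeGroup α) :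
    (w.toWord.map f).sum =
      Multiplicative.toAdd (FreeGroup.lift (fun a => Multiplicative.ofAdd (f (a, true))) w) := by
  conv_rhs => rw [← FreeGroup.mk_toWord (x := w), FreeGroup.lift_mk]
  induction w.toWord with
  | nil => simp
  | cons p t ih =>
    rcases p with ⟨a, _ | _⟩ <;> simp_all

noncomputable def latticeToComplex : (Fin 2 → ℤ) →+ ℂ where
  toFun v := (v 0 : ℂ) + (v 1 : ℂ) * I
  map_zero' := by simp
  map_add' v w := by push_cast [Pi.add_apply]; ring

lemma sum_map_dx_toWord (w : FreeGroup S4) :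
    (w.toWord.map dx).sum = latticeToComplex (Multiplicative.toAdd (φ (pa (ev w)))) := by
  have hom_eq : FreeGroup.lift (fun l => Multiplicative.ofAdd (dx (l, true))) =
      (AddMonoidHom.toMultiplicative latticeToComplex).comp (φ.comp (pa.comp ev)) := by
    refine (FreeGroup.ext_hom _ _ ?_).symm
    rintro (i | i) <;> fin_cases i <;>
      simp [ev, pa, φ, x, y, a, b, c, e, latticeToComplex, dx]
  rw [FreeGroup.sum_map_toWord_eq_toAdd_lift dx dx_false, hom_eq]
  rfl

lemma sum_map_dy_toWord (w : FreeGroup S4) :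
    (w.toWord.map dy).sum = -latticeToComplex (Multiplicative.toAdd (φ (pb (ev w)))) := by
  have hom_eq : FreeGroup.lift (fun l => Multiplicative.ofAdd (dy (l, true))) =
      (AddMonoidHom.toMultiplicative (-latticeToComplex)).comp (φ.comp (pb.comp ev)) := by
    refine (FreeGroup.ext_hom _ _ ?_).symm
    rintro (i | i) <;> fin_cases i <;>
      simp [ev, pb, φ, x, y, a, b, c, e, latticeToComplex, dy]
  rw [FreeGroup.sum_map_toWord_eq_toAdd_lift dy dy_false, hom_eq]
  rfl

/-- The pair of piecewise-linear paths `(γ_x, γ_y)` associated to a word `w` representing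
the trivial element of the Bridson–Dison group, with base points `p̂_x, p̂_y`, is a loop in
the configuration space `Conf₂(ℂ∖{0})`: along every segment (the `k`-th letter, at
parameter `s ∈ [0,1]`) the three points `0, γ_x, γ_y` are pairwise distinct, and both paths
return to their starting points. -/
theorem loop_in_configuration_space (px py : GaussianInt)
    (w : FreeGroup S4) (hw : ev w = 1) :
    (((w.toWord).map dx).sum = 0 ∧ ((w.toWord).map dy).sum = 0) ∧
      ∀ (k : ℕ) (hk : k < w.toWord.length) (s : ℝ), 0 ≤ s → s ≤ 1 →
        (hatx px + (((w.toWord).take k).map dx).sum + (s : ℂ) * dx (w.toWord.get ⟨k, hk⟩))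
            ≠ 0 ∧
        (haty py + (((w.toWord).take k).map dy).sum + (s : ℂ) * dy (w.toWord.get ⟨k, hk⟩))
            ≠ 0 ∧
        (hatx px + (((w.toWord).take k).map dx).sum + (s : ℂ) * dx (w.toWord.get ⟨k, hk⟩))
          ≠ (haty py + (((w.toWord).take k).map dy).sum +
              (s : ℂ) * dy (w.toWord.get ⟨k, hk⟩)) := by
  refine ⟨⟨by simp [sum_map_dx_toWord, hw], by simp [sum_map_dy_toWord, hw]⟩, ?_⟩
  intro k hk s _ _
  set p := w.toWord.get ⟨k, hk⟩
  have hgx := sum_map_mem_range dx_mem_range (w.toWord.take k)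
  have hgy := sum_map_mem_range dy_mem_range (w.toWord.take k)
  refine ⟨?_, ?_, sub_ne_zero.mp ?_⟩
  · rw [hatx_eq]
    exact gaussianInt_add_div_three_add_ofReal_mul_ne_zero px (by decide) hgx
      (dx_re_eq_zero_or_im_eq_zero p) s
  · rw [haty_eq]
    exact gaussianInt_add_div_three_add_ofReal_mul_ne_zero py (by decide) hgy
      (dy_re_eq_zero_or_im_eq_zero p) s
  · have hdiff := gaussianInt_add_div_three_add_ofReal_mul_ne_zero (px - py) (k := -2) (by decide)
      (sub_mem hgx hgy) (dx_sub_dy_re_eq_zero_or_im_eq_zero p) s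
    rw [hatx_eq, haty_eq]
    convert hdiff using 1
    rw [map_sub]
    push_cast
    ring
end
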